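/- arXiv:0909.1852 — 2 statements merged into one kernel-verified Lean document; each statement's English description precedes it below -/
import Mathlib

section
/- For every positive integer m and every two complex numbers α ≠ 0 and x, ∑_{k=1}^m x^k / k^α = ∑_{j=1}^m j! · S(−α, j) · σ(x, m, j), where σ(x, m, j) = ∑_{k=j}^m C(k, j) x^k. -/
/-!
`j! S(β, j) = ∑_{i=1}^j (-1)^{j-i} C(j, i) i^β` is the `j`-th forward difference at `0` of
`i ↦ i^β` once its value at `0` is replaced by `0`, so the Gregory–Newton formula inverts this
binomial transform: `k^β = ∑_{j=1}^k C(k, j) j! S(β, j)`. Taking `β = -α`, multiplying by `x^k`,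
summing over `1 ≤ k ≤ m` and exchanging the two sums gives the identity.
-/

open Finset

/-- Stirling function of the second kind with complex argument `α`:
`S(α, k) = (1/k!) ∑_{j=1}^k (-1)^{k-j} C(k, j) j^α`. -/
noncomputable def stirlingS (α : ℂ) (k : ℕ) : ℂ :=
  (1 / (Nat.factorial k : ℂ)) *
    ∑ j ∈ Finset.Icc 1 k, (-1 : ℂ) ^ (k - j) * (Nat.choose k j : ℂ) * (j : ℂ) ^ α

open scoped fwdDiff

section BinomialInversion

variable {G : Type*} [AddCommGroup G]

lemma fwdDiff_iter_eq_sum_Icc (f : ℕ → G) (hf : f 0 = 0) (n : ℕ) :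
    (Δ_[1])^[n] f 0 = ∑ k ∈ Icc 1 n, ((-1 : ℤ) ^ (n - k) * n.choose k) • f k := by
  rw [fwdDiff_iter_eq_sum_shift, range_eq_Ico, sum_eq_sum_Ico_succ_bot (by omega : 0 < n + 1)]
  simp [hf, Ico_add_one_right_eq_Icc]

lemma sum_Icc_choose_smul_fwdDiff_iter (f : ℕ → G) (n : ℕ) :
    ∑ k ∈ Icc 1 n, n.choose k • (Δ_[1])^[k] f 0 = f n - f 0 := by
  have := shift_eq_sum_fwdDiff_iter 1 f n 0
  rw [range_eq_Ico, sum_eq_sum_Ico_succ_bot (by omega : 0 < n + 1)] at this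
  rw [eq_sub_iff_add_eq']
  simpa [Ico_add_one_right_eq_Icc] using this.symm

lemma binomial_inversion_Icc (f : ℕ → G) {n : ℕ} (hn : 1 ≤ n) :
    ∑ j ∈ Icc 1 n, n.choose j • ∑ i ∈ Icc 1 j, ((-1 : ℤ) ^ (j - i) * j.choose i) • f i = f n := by
  set g : ℕ → G := Function.update f 0 0
  have hg : ∀ i, 1 ≤ i → g i = f i := fun i hi ↦ Function.update_of_ne (by omega) _ _
  calc _ = ∑ j ∈ Icc 1 n, n.choose j • (Δ_[1])^[j] g 0 := by
        refine sum_congr rfl fun j _ ↦ ?_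
        rw [fwdDiff_iter_eq_sum_Icc g (Function.update_self ..)]
        refine congrArg _ (sum_congr rfl fun i hi ↦ ?_)
        rw [hg i (mem_Icc.1 hi).1]
    _ = f n := by simp [sum_Icc_choose_smul_fwdDiff_iter, g, hg n hn]

end BinomialInversion

lemma factorial_mul_stirlingS (β : ℂ) (k : ℕ) :
    (k.factorial : ℂ) * stirlingS β k =
      ∑ j ∈ Icc 1 k, (-1 : ℂ) ^ (k - j) * (k.choose j : ℂ) * (j : ℂ) ^ β := by
  rw [stirlingS, ← mul_assoc, mul_one_div_cancel (by exact_mod_cast k.factorial_ne_zero), one_mul]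

theorem stmt6_general (m : ℕ) (α x : ℂ) :
    ∑ k ∈ Icc 1 m, x ^ k / (k : ℂ) ^ α =
      ∑ j ∈ Icc 1 m, (Nat.factorial j : ℂ) * stirlingS (-α) j *
        ∑ k ∈ Icc j m, (Nat.choose k j : ℂ) * x ^ k := by
  have inversion (k : ℕ) (hk : 1 ≤ k) :
      ∑ j ∈ Icc 1 k, (k.choose j : ℂ) * ((j.factorial : ℂ) * stirlingS (-α) j) =
        (k : ℂ) ^ (-α) := by
    simpa [factorial_mul_stirlingS, zsmul_eq_mul, nsmul_eq_mul]
      using binomial_inversion_Icc (fun i : ℕ ↦ (i : ℂ) ^ (-α)) hk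
  calc _ = ∑ k ∈ Icc 1 m, ∑ j ∈ Icc 1 k,
        (j.factorial : ℂ) * stirlingS (-α) j * ((k.choose j : ℂ) * x ^ k) := by
        refine sum_congr rfl fun k hk ↦ ?_
        rw [div_eq_mul_inv, ← Complex.cpow_neg, ← inversion k (mem_Icc.1 hk).1, mul_sum]
        exact sum_congr rfl fun j _ ↦ by ring
    _ = _ := by
        rw [sum_comm' (t' := Icc 1 m) (s' := fun j ↦ Icc j m) (by intros; simp only [mem_Icc]; omega)]
        simp only [mul_sum]

theorem stmt6 (m : ℕ) (hm : 0 < m) (α x : ℂ) (hα : α ≠ 0) :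
    ∑ k ∈ Icc 1 m, x ^ k / (k : ℂ) ^ α =
      ∑ j ∈ Icc 1 m, (Nat.factorial j : ℂ) * stirlingS (-α) j *
        ∑ k ∈ Icc j m, (Nat.choose k j : ℂ) * x ^ k :=
  stmt6_general m α x
end

section
/- (Proposition 4, second identity) For every positive integer m and every complex number α ≠ 0, ∑_{k=1}^m k^α / (m − k + 1) = ∑_{j=1}^m j! · S(α, j) · C(m+1, j) · (H_{m+1} − H_j). -/
open Finset

/-!
`j! S(α, j)` is the `j`-th forward difference at `0` of `x ↦ x^α` (with the value at `0` set to
`0`), so Newton's forward-difference formula expands `k^α = ∑_j C(k, j) j! S(α, j)`. Exchanging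
the two sums reduces the theorem to `∑_{k ≤ m} C(k, j) / (m + 1 - k) = C(m + 1, j) (H_{m+1} - H_j)`,
which follows by induction on `m` from Pascal's rule and `(m + 2) C(m + 1, j) = (j + 1) C(m + 2, j + 1)`.
-/

open fwdDiff

theorem sum_range_choose_div_eq_choose_mul_harmonic_sub (m j : ℕ) :
    ∑ k ∈ range (m + 1), (k.choose j : ℚ) / ((m - k + 1 : ℕ) : ℚ) =
      (m + 1).choose j * (harmonic (m + 1) - harmonic j) := by
  induction m generalizing j with
  | zero => rcases j with _ | _ | j <;> simp [harmonic_succ, Nat.choose_eq_zero_of_lt]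
  | succ m ih =>
    rw [sum_range_succ']
    simp only [Nat.add_sub_add_right]
    rcases j with _ | j
    · have h0 := ih 0
      simp only [Nat.choose_zero_right, Nat.cast_one, harmonic_zero, sub_zero, one_mul] at h0 ⊢
      rw [h0, harmonic_succ (m + 1)]
      push_cast
      ring
    · rw [sum_congr rfl fun x _ => by rw [Nat.choose_succ_succ', Nat.cast_add, add_div],
        sum_add_distrib, ih, ih, Nat.choose_zero_succ, harmonic_succ (m + 1), harmonic_succ j]
      have hmul : ((m + 2 : ℕ) : ℚ) * (m + 1).choose j = (m + 2).choose (j + 1) * (j + 1) := by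
        exact_mod_cast Nat.add_one_mul_choose_eq (m + 1) j
      rw [Nat.choose_succ_succ' (m + 1)] at hmul ⊢
      push_cast at hmul ⊢
      field_simp
      linear_combination hmul

theorem eq_sum_range_choose_smul_fwdDiff_iter {G : Type*} [AddCommGroup G] (f : ℕ → G)
    {k n : ℕ} (hk : k ≤ n) : f k = ∑ j ∈ range (n + 1), k.choose j • Δ_[1] ^[j] f 0 := by
  have newton := shift_eq_sum_fwdDiff_iter 1 f k 0
  rw [zero_add, smul_eq_mul, mul_one] at newton
  rw [newton]
  refine sum_subset (range_subset_range.2 (by omega)) fun j _ hj => ?_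
  rw [Nat.choose_eq_zero_of_lt (by simpa using hj), zero_smul]

theorem sum_range_div_eq_sum_fwdDiff_iter {K : Type*} [Field K] [CharZero K] (f : ℕ → K)
    (m : ℕ) :
    ∑ k ∈ range (m + 1), f k / ((m - k + 1 : ℕ) : K) =
      ∑ j ∈ range (m + 1), Δ_[1] ^[j] f 0 * (m + 1).choose j *
        ((harmonic (m + 1) : K) - harmonic j) := by
  calc ∑ k ∈ range (m + 1), f k / ((m - k + 1 : ℕ) : K)
      = ∑ k ∈ range (m + 1), ∑ j ∈ range (m + 1),
          Δ_[1] ^[j] f 0 * ((k.choose j : K) / ((m - k + 1 : ℕ) : K)) := by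
        refine sum_congr rfl fun k hk => ?_
        rw [eq_sum_range_choose_smul_fwdDiff_iter f (Nat.lt_succ_iff.1 (mem_range.1 hk)),
          sum_div]
        simp only [nsmul_eq_mul]
        exact sum_congr rfl fun j _ => by ring
    _ = ∑ j ∈ range (m + 1), Δ_[1] ^[j] f 0 *
          ((∑ k ∈ range (m + 1), (k.choose j : ℚ) / ((m - k + 1 : ℕ) : ℚ) : ℚ) : K) := by
        rw [sum_comm]
        push_cast
        simp only [mul_sum]
    _ = _ := by
        simp only [sum_range_choose_div_eq_choose_mul_harmonic_sub, mul_assoc]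
        push_cast
        rfl

theorem sum_range_succ_eq_sum_Icc_one {M : Type*} [AddCommMonoid M] {g : ℕ → M} (hg : g 0 = 0)
    (n : ℕ) : ∑ k ∈ range (n + 1), g k = ∑ k ∈ Icc 1 n, g k := by
  rw [Nat.range_succ_eq_Icc_zero, ← insert_Icc_add_one_left_eq_Icc n.zero_le,
    sum_insert (by simp), hg, zero_add, zero_add]

theorem sum_Icc_div_eq_sum_Icc_alternating {K : Type*} [Field K] [CharZero K] (f : ℕ → K)
    (m : ℕ) :
    ∑ k ∈ Icc 1 m, f k / ((m - k + 1 : ℕ) : K) =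
      ∑ j ∈ Icc 1 m, (∑ i ∈ Icc 1 j, (-1 : K) ^ (j - i) * j.choose i * f i) *
        (m + 1).choose j * ((harmonic (m + 1) : K) - harmonic j) := by
  -- Only the values of `f` at positive integers enter, so we may assume `f 0 = 0`.
  set g := Function.update f 0 0
  have hg0 : g 0 = 0 := Function.update_self ..
  have hg : ∀ n ∈ Icc 1 m, g n = f n := fun n hn => Function.update_of_ne (by simp at hn; omega) ..
  have hΔ : ∀ j, Δ_[1] ^[j] g 0 = ∑ i ∈ Icc 1 j, (-1 : K) ^ (j - i) * j.choose i * f i := by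
    intro j
    rw [fwdDiff_iter_eq_sum_shift, sum_range_succ_eq_sum_Icc_one (by simp [hg0])]
    refine sum_congr rfl fun i hi => ?_
    simp [g, Function.update_of_ne (show i ≠ 0 by simp at hi; omega)]
  calc ∑ k ∈ Icc 1 m, f k / ((m - k + 1 : ℕ) : K)
      = ∑ k ∈ range (m + 1), g k / ((m - k + 1 : ℕ) : K) := by
        rw [sum_range_succ_eq_sum_Icc_one (by simp [hg0])]
        exact sum_congr rfl fun k hk => by rw [hg k hk]
    _ = _ := by
        rw [sum_range_div_eq_sum_fwdDiff_iter, sum_range_succ_eq_sum_Icc_one (by simp [hg0])]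
        simp only [hΔ]

theorem stmt12_general (m : ℕ) (α : ℂ) :
    ∑ k ∈ Icc 1 m, (k : ℂ) ^ α / ((m - k + 1 : ℕ) : ℂ) =
      ∑ j ∈ Icc 1 m, (Nat.factorial j : ℂ) * stirlingS α j *
        (Nat.choose (m + 1) j : ℂ) *
        (((harmonic (m + 1) : ℚ) : ℂ) - ((harmonic j : ℚ) : ℂ)) := by
  rw [sum_Icc_div_eq_sum_Icc_alternating]
  refine sum_congr rfl fun j _ => ?_
  rw [stirlingS, ← mul_assoc, mul_one_div_cancel (Nat.cast_ne_zero.2 j.factorial_ne_zero), one_mul]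

theorem stmt12 (m : ℕ) (hm : 0 < m) (α : ℂ) (hα : α ≠ 0) :
    ∑ k ∈ Icc 1 m, (k : ℂ) ^ α / ((m - k + 1 : ℕ) : ℂ) =
      ∑ j ∈ Icc 1 m, (Nat.factorial j : ℂ) * stirlingS α j *
        (Nat.choose (m + 1) j : ℂ) *
        (((harmonic (m + 1) : ℚ) : ℂ) - ((harmonic j : ℚ) : ℂ)) :=
  stmt12_general m α
end
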